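/- arXiv:2303.01726 — 14 statements merged into one kernel-verified Lean document; each statement's English description precedes it below -/
import Mathlib

section
/- For any strings u and T with u a substring of T, the set of strings v such that EndPos(v,T) = EndPos(u,T) contains a unique longest element, and every element of this equivalence class is a suffix of that longest element. -/
/-- 1-indexed ending positions of occurrences of `u` in `T`:
`i ∈ EndPos u T` iff `T[i-|u|+1..i] = u`. -/
def EndPos {α : Type*} (u T : List α) : Set ℕ :=
  {i | u.length ≤ i ∧ i ≤ T.length ∧ u <:+ T.take i}

/-- 0-indexed beginning positions of occurrences of `u` in `T`. -/
def BegPos {α : Type*} (u T : List α) : Set ℕ :=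
  {i | i + u.length ≤ T.length ∧ u <+: T.drop i}

/-- `u` is left-maximal in `T`: `u` is a prefix of `T`, or two distinct
characters immediately precede occurrences of `u` in `T`. -/
def LeftMaximal {α : Type*} (u T : List α) : Prop :=
  u <+: T ∨ ∃ c d : α, c ≠ d ∧ (c :: u) <:+: T ∧ (d :: u) <:+: T

/-- `u` is right-maximal in `T`: `u` is a suffix of `T`, or two distinct
characters immediately follow occurrences of `u` in `T`. -/
def RightMaximal {α : Type*} (u T : List α) : Prop :=
  u <:+ T ∨ ∃ c d : α, c ≠ d ∧ (u ++ [c]) <:+: T ∧ (u ++ [d]) <:+: T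

/-- `u` is maximal in `T` iff it is both left-maximal and right-maximal. -/
def MaximalSubstr {α : Type*} (u T : List α) : Prop :=
  LeftMaximal u T ∧ RightMaximal u T

/-! Every member of the class ends at each end position of `u`; fixing one such position `i`,
all members are suffixes of `T.take i`, so they form a finite chain under the suffix order, and
its longest element is the greatest one. -/

theorem List.exists_forall_isSuffix_of_forall_isSuffix {α : Type*} {S : Set (List α)}
    {p : List α} (hne : S.Nonempty) (hp : ∀ v ∈ S, v <:+ p) : ∃ w ∈ S, ∀ v ∈ S, v <:+ w := by
  have hfin : Set.Finite S :=
    p.tails.finite_toSet.subset fun v hv => (List.mem_tails v p).2 (hp v hv)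
  obtain ⟨w, hwS, hwmax⟩ := S.exists_max_image List.length hfin hne
  refine ⟨w, hwS, fun v hvS => ?_⟩
  rcases List.suffix_or_suffix_of_suffix (hp v hvS) (hp w hwS) with hvw | hwv
  · exact hvw
  · rw [hwv.eq_of_length (le_antisymm hwv.length_le (hwmax v hvS))]

theorem endPos_nonempty_of_infix {α : Type*} {u T : List α} (hu : u <:+: T) :
    (EndPos u T).Nonempty := by
  obtain ⟨s, t, rfl⟩ := hu
  refine ⟨s.length + u.length, by omega, by simp, ?_⟩
  rw [← List.length_append, List.take_left]
  exact List.suffix_append s u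

theorem isSuffix_take_of_endPos_eq {α : Type*} {u v T : List α} {i : ℕ}
    (hi : i ∈ EndPos u T) (hv : EndPos v T = EndPos u T) : v <:+ T.take i :=
  (hv ▸ hi : i ∈ EndPos v T).2.2

/-- For any strings `u`, `T` with `u` a substring of `T`, the
left-equivalence class of `u` (substrings of `T` with the same end-position
set) contains a unique longest element, and every member of the class is a
suffix of that longest element. -/
theorem stmt0 {α : Type*} (u T : List α) (hu : u <:+: T) :
    ∃! w : List α, (w <:+: T ∧ EndPos w T = EndPos u T) ∧
      ∀ v : List α, v <:+: T → EndPos v T = EndPos u T → v <:+ w := by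
  obtain ⟨i, hi⟩ := endPos_nonempty_of_infix hu
  obtain ⟨w, hw, hmax⟩ := List.exists_forall_isSuffix_of_forall_isSuffix
    (S := {v | v <:+: T ∧ EndPos v T = EndPos u T}) ⟨u, hu, rfl⟩
    (fun v hv => isSuffix_take_of_endPos_eq hi hv.2)
  refine ⟨w, ⟨hw, fun v hvT hvu => hmax v ⟨hvT, hvu⟩⟩, ?_⟩
  rintro w' ⟨hw', hmax'⟩
  have hw'w : w' <:+ w := hmax w' hw'
  exact hw'w.eq_of_length (le_antisymm hw'w.length_le (hmax' w hw.1 hw.2).length_le)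
end

section
/- If y is a substring of T that is not the longest element of its left-equivalence class (under equality of end-position sets), then there exists a unique nonempty string α such that αy is the longest element of the class; in particular every occurrence of y in T is immediately preceded by α. -/
/-- if `y` is a substring of `T` that is not the longest element
`w` of its left-equivalence class, then there is a unique nonempty string `a`
with `a ++ y = w`; in particular every occurrence of `y` in `T` is immediately
preceded by `a`. -/
theorem stmt1 {α : Type*} (y w T : List α) (hy : y <:+: T)
    (hw : w <:+: T) (hclass : EndPos w T = EndPos y T)
    (hlong : ∀ v : List α, v <:+: T → EndPos v T = EndPos y T →
      v.length ≤ w.length)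
    (hne : y ≠ w) :
    ∃! a : List α, a ≠ [] ∧ a ++ y = w ∧
      ∀ i ∈ EndPos y T, (a ++ y) <:+ T.take i := by
  have hylen : y.length ≤ w.length := hlong y hy rfl
  -- w has an occurrence; get its end position
  obtain ⟨s, t, hst⟩ := hw
  have hst' : T = (s ++ w) ++ t := by rw [← hst, List.append_assoc]
  have hiw : (s ++ w).length ∈ EndPos w T := by
    refine ⟨by simp, ?_, ?_⟩
    · rw [hst']; simp
    · rw [hst', List.take_left]
      exact ⟨s, rfl⟩
  have hiy : (s ++ w).length ∈ EndPos y T := hclass ▸ hiw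
  have hysuf : y <:+ s ++ w := by
    have := hiy.2.2
    rwa [hst', List.take_left] at this
  -- y is a suffix of w
  have hyw : y <:+ w := by
    have h1 : y.reverse <+: (s ++ w).reverse := List.reverse_prefix.mpr (by simpa)
    have h2 : w.reverse <+: (s ++ w).reverse := List.reverse_prefix.mpr (by simp)
    rcases List.prefix_or_prefix_of_prefix h1 h2 with h | h
    · exact List.reverse_prefix.mp (by simpa using h)
    · have : w.reverse = y.reverse :=
        List.IsPrefix.eq_of_length_le h (by simpa using hylen)
      exact (List.reverse_injective this) ▸ List.suffix_refl _
  obtain ⟨a, ha⟩ := hyw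
  refine ⟨a, ⟨?_, ha, ?_⟩, ?_⟩
  · rintro rfl
    exact hne (by simpa using ha)
  · intro i hi
    rw [ha]
    exact (hclass ▸ hi : i ∈ EndPos w T).2.2
  · rintro b ⟨-, hb, -⟩
    exact List.append_cancel_right (hb.trans ha.symm)
end

section
/- A substring u of T is left-maximal in T (i.e., u is the longest element of its left-equivalence class) if and only if u is a prefix of T or there exist two distinct characters c,d with cu and du both substrings of T. -/
/-- For any occurrence `T = s ++ w ++ t`, the position `s.length + w.length`
is an end position of `w`. -/
lemma mem_endPos_of_eq {α : Type*} {w s t T : List α} (h : T = s ++ w ++ t) :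
    s.length + w.length ∈ EndPos w T := by
  subst h
  refine ⟨Nat.le_add_left _ _, by simp, ?_⟩
  have hl : s.length + w.length = (s ++ w).length := by simp
  rw [hl, List.take_left]
  exact List.suffix_append s w

/-- a substring `u` of `T` is the longest element of its
left-equivalence class iff `u` is a prefix of `T` or two distinct characters
immediately precede occurrences of `u` in `T`. -/
theorem stmt2 {α : Type*} (u T : List α) (hu : u <:+: T) :
    (∀ v : List α, v <:+: T → EndPos v T = EndPos u T →
        v.length ≤ u.length) ↔
      (u <+: T ∨ ∃ c d : α, c ≠ d ∧ (c :: u) <:+: T ∧ (d :: u) <:+: T) := by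
  constructor
  · intro h
    by_contra hc
    push_neg at hc
    obtain ⟨hnp, hcd⟩ := hc
    obtain ⟨s, t, hst⟩ := hu
    rcases s.eq_nil_or_concat with rfl | ⟨s', c, rfl⟩
    · exact hnp ⟨t, by simpa using hst⟩
    · have hcinf : (c :: u) <:+: T := ⟨s', t, by simpa using hst⟩
      have hEq : EndPos (c :: u) T = EndPos u T := by
        ext i
        simp only [EndPos, Set.mem_setOf_eq, List.length_cons]
        constructor
        · rintro ⟨h1, h2, h3⟩
          exact ⟨by omega, h2, (List.suffix_cons c u).trans h3⟩
        · rintro ⟨h1, h2, h3⟩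
          have hlt : u.length < i := by
            rcases lt_or_eq_of_le h1 with hlt | heq
            · exact hlt
            · exfalso
              apply hnp
              have hlen : (T.take i).length = u.length := by
                rw [List.length_take]; omega
              have := h3.eq_of_length hlen.symm
              rw [this]
              exact List.take_prefix _ _
          obtain ⟨p, hp⟩ := h3
          have hplen : p.length + u.length = i := by
            have := congrArg List.length hp
            simp [List.length_take] at this
            omega
          rcases p.eq_nil_or_concat with rfl | ⟨p', d, rfl⟩
          · simp at hplen; omega
          · have hdsuf : (d :: u) <:+ T.take i := ⟨p', by simpa using hp⟩
            have hdinf : (d :: u) <:+: T :=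
              hdsuf.isInfix.trans (List.take_prefix i T).isInfix
            have hdc : d = c := by
              by_contra hne
              exact hcd d c hne hdinf hcinf
            subst hdc
            exact ⟨by omega, h2, hdsuf⟩
      have := h (c :: u) hcinf hEq
      simp at this
  · rintro (hp | ⟨c, d, hne, hc, hd⟩) v hv hEqv
    · have hmem : u.length ∈ EndPos u T := by
        refine ⟨le_refl _, hp.length_le, ?_⟩
        rw [← List.prefix_iff_eq_take.mp hp]
      rw [← hEqv] at hmem
      exact hmem.1
    · by_contra hlen
      push_neg at hlen
      obtain ⟨s, t, hst⟩ := hc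
      obtain ⟨s', t', hst'⟩ := hd
      -- end positions of the occurrences of c::u and d::u
      have hmc := mem_endPos_of_eq (w := c :: u) hst.symm
      have hmd := mem_endPos_of_eq (w := d :: u) hst'.symm
      -- they are end positions of u too
      have hmcu : s.length + (c :: u).length ∈ EndPos u T := by
        obtain ⟨h1, h2, h3⟩ := hmc
        exact ⟨by simp at h1 ⊢; omega, h2, (List.suffix_cons c u).trans h3⟩
      have hmdu : s'.length + (d :: u).length ∈ EndPos u T := by
        obtain ⟨h1, h2, h3⟩ := hmd
        exact ⟨by simp at h1 ⊢; omega, h2, (List.suffix_cons d u).trans h3⟩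
      rw [← hEqv] at hmcu hmdu
      -- v and c::u are suffixes of the same take; |c::u| ≤ |v|
      have hcv : (c :: u) <:+ v := by
        rcases List.suffix_or_suffix_of_suffix hmc.2.2 hmcu.2.2 with h | h
        · exact h
        · have heq : v = c :: u := h.eq_of_length
            (by have := h.length_le; simp at this ⊢; omega)
          rw [heq]
      have hdv : (d :: u) <:+ v := by
        rcases List.suffix_or_suffix_of_suffix hmd.2.2 hmdu.2.2 with h | h
        · exact h
        · have heq : v = d :: u := h.eq_of_length
            (by have := h.length_le; simp at this ⊢; omega)
          rw [heq]
      have : (c :: u) = (d :: u) := by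
        rcases List.suffix_or_suffix_of_suffix hcv hdv with h | h
        · exact h.eq_of_length (by simp)
        · exact (h.eq_of_length (by simp)).symm
      exact hne (List.cons.injEq .. ▸ this).1
end

section
/- A substring u of T is right-maximal in T (i.e., u is the longest element of its right-equivalence class) if and only if u is a suffix of T or there exist two distinct characters c,d with uc and ud both substrings of T. -/
lemma infix_of_pref_drop {α : Type*} {l T : List α} {i : ℕ} (h : l <+: T.drop i) :
    l <:+: T := h.isInfix.trans (T.drop_suffix i).isInfix

lemma infix_iff_begpos {α : Type*} {u T : List α} :
    u <:+: T ↔ ∃ i, i ∈ BegPos u T := by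
  constructor
  · rintro ⟨s, t, rfl⟩
    refine ⟨s.length, ⟨by simp, ?_⟩⟩
    rw [List.append_assoc, List.drop_left]
    exact u.prefix_append t
  · rintro ⟨i, _, h⟩; exact infix_of_pref_drop h

lemma suffix_of_end {α : Type*} {u T : List α} {i : ℕ} (h1 : i + u.length = T.length)
    (h2 : u <+: T.drop i) : u <:+ T := by
  have hl : u.length = (T.drop i).length := by simp [List.length_drop]; omega
  rw [h2.eq_of_length hl]
  exact T.drop_suffix i

lemma exists_ext {α : Type*} {u T : List α} {i : ℕ} (h1 : i + u.length < T.length)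
    (h2 : u <+: T.drop i) : ∃ c, (u ++ [c]) <+: T.drop i := by
  obtain ⟨r, hr⟩ := h2
  cases r with
  | nil =>
    exfalso
    have := congrArg List.length hr
    simp [List.length_drop] at this
    omega
  | cons c r' => exact ⟨c, r', by simpa using hr⟩


/-- a substring `u` of `T` is the longest element of its
right-equivalence class iff `u` is a suffix of `T` or two distinct characters
immediately follow occurrences of `u` in `T`. -/
theorem stmt3 {α : Type*} (u T : List α) (hu : u <:+: T) :
    (∀ v : List α, v <:+: T → BegPos v T = BegPos u T →
        v.length ≤ u.length) ↔
      (u <:+ T ∨ ∃ c d : α, c ≠ d ∧ (u ++ [c]) <:+: T ∧ (u ++ [d]) <:+: T) := by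
  constructor
  · intro hmax
    by_contra h
    have hns : ¬ u <:+ T := fun hs => h (Or.inl hs)
    have huniq : ∀ c d : α, (u ++ [c]) <:+: T → (u ++ [d]) <:+: T → c = d := by
      intro c d hc hd
      by_contra hne
      exact h (Or.inr ⟨c, d, hne, hc, hd⟩)
    obtain ⟨i0, hi0⟩ := infix_iff_begpos.mp hu
    have hlt0 : i0 + u.length < T.length :=
      lt_of_le_of_ne hi0.1 (fun heq => hns (suffix_of_end heq hi0.2))
    obtain ⟨c, hc⟩ := exists_ext hlt0 hi0.2
    have hcinf : (u ++ [c]) <:+: T := infix_of_pref_drop hc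
    have heq : BegPos (u ++ [c]) T = BegPos u T := by
      ext i
      constructor
      · rintro ⟨h1, h2⟩
        refine ⟨?_, (u.prefix_append [c]).trans h2⟩
        simp at h1; omega
      · rintro ⟨h1, h2⟩
        have hlt : i + u.length < T.length :=
          lt_of_le_of_ne h1 (fun heq' => hns (suffix_of_end heq' h2))
        obtain ⟨c', hc'⟩ := exists_ext hlt h2
        have : c' = c := huniq c' c (infix_of_pref_drop hc') hcinf
        subst this
        exact ⟨by simp; omega, hc'⟩
    have := hmax (u ++ [c]) hcinf heq
    simp at this
  · rintro (hs | ⟨c, d, hne, hc, hd⟩) v hv hbeg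
    · obtain ⟨s, rfl⟩ := hs
      have hi : (s.length : ℕ) ∈ BegPos u (s ++ u) := by
        refine ⟨by simp, ?_⟩
        rw [List.drop_left]
      rw [← hbeg] at hi
      have := hi.1
      simp at this
      omega
    · by_contra hlen
      push_neg at hlen
      have key : ∀ e : α, (u ++ [e]) <:+: T → (u ++ [e]) <+: v := by
        intro e he
        obtain ⟨i, hi⟩ := infix_iff_begpos.mp he
        have hiu : i ∈ BegPos u T :=
          ⟨by have := hi.1; simp at this; omega, (u.prefix_append [e]).trans hi.2⟩
        rw [← hbeg] at hiu
        exact List.prefix_of_prefix_length_le hi.2 hiu.2 (by simp; omega)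
      have : u ++ [c] = u ++ [d] :=
        (List.prefix_of_prefix_length_le (key c hc) (key d hd) (by simp)).eq_of_length
          (by simp)
      simp at this
      exact hne this
end

section
/- Let T be a string and a a character, and set T' = a·T. If the string ax is maximal in T' but not maximal in T, then x is maximal in T. -/
private lemma rm_aux {α : Type*} {T x : List α} {a : α}
    (hr : RightMaximal (a :: x) (a :: T)) : RightMaximal x T := by
  rcases hr with hs | ⟨c, d, hcd, hc, hd⟩
  · rcases List.suffix_cons_iff.mp hs with heq | hsuf
    · obtain ⟨-, rfl⟩ := List.cons.inj heq
      exact Or.inl List.suffix_rfl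
    · exact Or.inl ((List.suffix_cons a x).trans hsuf)
  · refine Or.inr ⟨c, d, hcd, ?_, ?_⟩
    · rcases List.infix_cons_iff.mp (by simpa using hc) with hp | hi
      · exact ((List.cons_prefix_cons.mp hp).2).isInfix
      · exact ((List.suffix_cons a _).isInfix).trans hi
    · rcases List.infix_cons_iff.mp (by simpa using hd) with hp | hi
      · exact ((List.cons_prefix_cons.mp hp).2).isInfix
      · exact ((List.suffix_cons a _).isInfix).trans hi

/-- If `a::x` is right-maximal in `a::T`, left-maximal in `T`, but not maximal
in `T`, then `x` is a prefix of `T`. -/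
private lemma lm_aux {α : Type*} {T x : List α} {a : α}
    (hr : RightMaximal (a :: x) (a :: T)) (hl : LeftMaximal (a :: x) T)
    (h2 : ¬ MaximalSubstr (a :: x) T) : x <+: T := by
  rcases hr with hs | ⟨c, d, hcd, hc, hd⟩
  · rcases List.suffix_cons_iff.mp hs with heq | hsuf
    · obtain ⟨-, rfl⟩ := List.cons.inj heq
      exact List.prefix_rfl
    · exact absurd ⟨hl, Or.inl hsuf⟩ h2
  · rcases List.infix_cons_iff.mp (by simpa using hc) with hp | hic
    · exact (List.prefix_append x [c]).trans (List.cons_prefix_cons.mp hp).2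
    · rcases List.infix_cons_iff.mp (by simpa using hd) with hp | hid
      · exact (List.prefix_append x [d]).trans (List.cons_prefix_cons.mp hp).2
      · exact absurd ⟨hl, Or.inr ⟨c, d, hcd, by simpa using hic, by simpa using hid⟩⟩ h2

/-- Lemma 1: if `ax` is maximal in `aT` but not maximal in `T`,
then `x` is maximal in `T`. -/
theorem stmt4 {α : Type*} (T x : List α) (a : α)
    (h1 : MaximalSubstr (a :: x) (a :: T)) (h2 : ¬ MaximalSubstr (a :: x) T) :
    MaximalSubstr x T := by
  refine ⟨?_, rm_aux h1.2⟩
  rcases h1.1 with hp | ⟨c, d, hcd, hc, hd⟩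
  · exact Or.inl (List.cons_prefix_cons.mp hp).2
  · rcases List.infix_cons_iff.mp hc with hpc | hic
    · exact Or.inl (lm_aux h1.2 (Or.inl (List.cons_prefix_cons.mp hpc).2) h2)
    · rcases List.infix_cons_iff.mp hd with hpd | hid
      · exact Or.inl (lm_aux h1.2 (Or.inl (List.cons_prefix_cons.mp hpd).2) h2)
      · exact Or.inl (lm_aux h1.2 (Or.inr ⟨c, d, hcd, hic, hid⟩) h2)
end

section
/- Let T be a string, a a character, and T' = a·T. If ax is maximal in T' but not maximal in T, then the out-degree of ax in CDAWG(aT) is at most the out-degree of x in CDAWG(T); that is, the number of right-extensions of ax in aT is at most the number of right-extensions of x in T. -/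
/-- Out-degree of `u` in `CDAWG(S)`: number of distinct right-extension
characters, plus one for the edge to the sink when `u = S`. -/
noncomputable def D5 {α : Type*} [DecidableEq α] (S u : List α) : ℕ :=
  (S.toFinset.filter (fun c => (u ++ [c]) <:+: S)).card +
    (if u = S then 1 else 0)

/-- Lemma 1, second part: if `ax` is maximal in `aT` but not in
`T`, then the out-degree of `ax` in `CDAWG(aT)` is at most the out-degree of
`x` in `CDAWG(T)`. -/
theorem stmt5 {α : Type*} [DecidableEq α] (T x : List α) (a : α)
    (h1 : MaximalSubstr (a :: x) (a :: T)) (h2 : ¬ MaximalSubstr (a :: x) T) :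
    D5 (a :: T) (a :: x) ≤ D5 T x := by
  have key : ∀ c : α, ((a :: x) ++ [c]) <:+: (a :: T) → (x ++ [c]) <:+: T := by
    intro c hc
    rcases List.infix_cons_iff.mp hc with h | h
    · rcases List.cons_prefix_cons.mp h with ⟨_, hp⟩
      exact hp.isInfix
    · exact ((x ++ [c]).suffix_cons a).isInfix.trans h
  unfold D5
  apply add_le_add
  · apply Finset.card_le_card
    intro c hc
    simp only [Finset.mem_filter, List.mem_toFinset] at hc ⊢
    have hi := key c hc.2
    refine ⟨?_, hi⟩
    have : [c] <:+: T := ((List.suffix_append x [c]).isInfix).trans hi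
    simpa using this.subset (List.mem_singleton_self c)
  · split_ifs with h1' h2'
    · rfl
    · exact absurd (List.cons_injective.eq_iff.mp h1' ▸ rfl : x = T) h2'
    all_goals omega
end

section
/- Let Σ = {a,b} be a binary alphabet and T a string containing both characters. Suppose a is not maximal in T, a is maximal in aT, and there exists a string x maximal in T with x ≠ ε and x ≠ T such that ax is not maximal in T but ax is maximal in aT. Then the number of distinct characters c with ac a substring of aT is strictly less than 2. -/
/-! The letter `a` is maximal in `T` as soon as `aa` occurs in `T`: the first occurrence of `a`
is a prefix of `T` or preceded by a letter other than `a`, and symmetrically for the last one.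
So `aa` does not occur in `T`, and it remains to rule out `aa` as a prefix of `aT`, i.e. `T = a⋯`.
Write the witness as `x = f x'`. If `f ≠ a`, then `ax` is not a prefix of `aT = aa⋯`, so all its
occurrences in `aT`, and all their extensions, lie inside `T`; hence maximality of `ax` passes from
`aT` to `T`. If `f = a`, every occurrence of `ax = aax'` in `aT` is the prefix (`aa` does not occur
in `T`), so `ax` is not right-maximal in `aT`. -/

section

variable {α : Type*} {a c : α} {u T : List α}

theorem exists_ne_pair_infix_of_not_prefix (ha : a ∈ T) (hp : ¬ [a] <+: T) :
    ∃ c, c ≠ a ∧ [c, a] <:+: T := by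
  induction T with
  | nil => simp at ha
  | cons d t ih =>
    have hda : d ≠ a := fun h => hp ⟨t, by rw [h]; rfl⟩
    have hat : a ∈ t := (List.mem_cons.mp ha).resolve_left (Ne.symm hda)
    by_cases hpt : [a] <+: t
    · obtain ⟨s, rfl⟩ := hpt
      exact ⟨d, hda, [], s, rfl⟩
    · obtain ⟨c, hca, hc⟩ := ih hat hpt
      exact ⟨c, hca, hc.trans (List.suffix_cons d t).isInfix⟩

theorem exists_ne_pair_infix_of_not_suffix (ha : a ∈ T) (hs : ¬ [a] <:+ T) :
    ∃ c, c ≠ a ∧ [a, c] <:+: T := by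
  obtain ⟨c, hca, hc⟩ := exists_ne_pair_infix_of_not_prefix (T := T.reverse)
    (List.mem_reverse.mpr ha) (fun hp => hs (List.reverse_prefix.mp hp))
  exact ⟨c, hca, List.reverse_infix.mp hc⟩

theorem maximalSubstr_singleton_of_pair_infix (h : [a, a] <:+: T) : MaximalSubstr [a] T := by
  have ha : a ∈ T := h.subset (by simp)
  constructor
  · by_cases hp : [a] <+: T
    · exact Or.inl hp
    · obtain ⟨c, hca, hc⟩ := exists_ne_pair_infix_of_not_prefix ha hp
      exact Or.inr ⟨c, a, hca, hc, h⟩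
  · by_cases hs : [a] <:+ T
    · exact Or.inl hs
    · obtain ⟨c, hca, hc⟩ := exists_ne_pair_infix_of_not_suffix ha hs
      exact Or.inr ⟨c, a, hca, hc, h⟩

theorem LeftMaximal.of_cons (h : LeftMaximal u (c :: T)) (hu : ¬ u <+: c :: T) :
    LeftMaximal u T := by
  rcases h with hp | ⟨d, e, hde, hd, he⟩
  · exact absurd hp hu
  have shift : ∀ {d : α}, d :: u <:+: c :: T → u <+: T ∨ d :: u <:+: T := fun {d} hd =>
    (List.infix_cons_iff.mp hd).imp_left fun hp => (List.cons_prefix_cons.mp hp).2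
  rcases shift hd with hp | hd
  · exact Or.inl hp
  rcases shift he with hp | he
  · exact Or.inl hp
  exact Or.inr ⟨d, e, hde, hd, he⟩

theorem RightMaximal.of_cons (h : RightMaximal u (c :: T)) (hu : ¬ u <+: c :: T) :
    RightMaximal u T := by
  have shift : ∀ {d : α}, u ++ [d] <:+: c :: T → u ++ [d] <:+: T := fun {d} hd =>
    (List.infix_cons_iff.mp hd).resolve_left fun hp => hu ((List.prefix_append u [d]).trans hp)
  rcases h with hs | ⟨d, e, hde, hd, he⟩
  · rcases List.suffix_cons_iff.mp hs with rfl | hs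
    · exact absurd (List.prefix_refl _) hu
    · exact Or.inl hs
  · exact Or.inr ⟨d, e, hde, shift hd, shift he⟩

theorem MaximalSubstr.of_cons (h : MaximalSubstr u (c :: T)) (hu : ¬ u <+: c :: T) :
    MaximalSubstr u T :=
  ⟨h.1.of_cons hu, h.2.of_cons hu⟩

theorem not_rightMaximal_cons_cons (haa : ¬ [a, a] <:+: T) (hT : a :: u ≠ T) :
    ¬ RightMaximal (a :: a :: u) (a :: T) := by
  have haa_infix : ∀ {v : List α}, a :: a :: v <:+: T → False := fun h =>
    haa ((List.prefix_append [a, a] _).isInfix.trans h)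
  rintro (hs | ⟨d, e, hde, hd, he⟩)
  · rcases List.suffix_cons_iff.mp hs with h | hs
    · exact hT (List.cons.inj h).2
    · exact haa_infix hs.isInfix
  · have hd : a :: a :: (u ++ [d]) <+: a :: T :=
      (List.infix_cons_iff.mp hd).resolve_right haa_infix
    have he : a :: a :: (u ++ [e]) <+: a :: T :=
      (List.infix_cons_iff.mp he).resolve_right haa_infix
    have hlen : (a :: a :: (u ++ [d])).length = (a :: a :: (u ++ [e])).length := by simp
    have := (List.prefix_of_prefix_length_le hd he hlen.le).eq_of_length hlen
    exact hde (by simpa using this)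

end

theorem stmt6_general {α : Type*} [DecidableEq α] (a b : α)
    (hSigma : ∀ c : α, c = a ∨ c = b)
    (T : List α)
    (h1 : ¬ MaximalSubstr [a] T)
    (h3 : ∃ x : List α, MaximalSubstr x T ∧ x ≠ [] ∧ x ≠ T ∧
      ¬ MaximalSubstr (a :: x) T ∧ MaximalSubstr (a :: x) (a :: T)) :
    ((a :: T).toFinset.filter (fun c => [a, c] <:+: (a :: T))).card < 2 := by
  have haa : ¬ [a, a] <:+: T := fun h => h1 (maximalSubstr_singleton_of_pair_infix h)
  have haa' : ¬ [a, a] <:+: a :: T := by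
    intro h
    obtain ⟨T', rfl⟩ : [a] <+: T :=
      (List.cons_prefix_cons.mp ((List.infix_cons_iff.mp h).resolve_right haa)).2
    obtain ⟨x, -, hx, hxT, hnax, hax⟩ := h3
    obtain ⟨f, x', rfl⟩ := List.exists_cons_of_ne_nil hx
    by_cases hf : f = a
    · subst hf
      exact not_rightMaximal_cons_cons haa hxT hax.2
    · exact hnax (hax.of_cons fun hp => hf (List.cons_prefix_cons.mp
        (List.cons_prefix_cons.mp hp).2).1)
  have hsub : (a :: T).toFinset.filter (fun c => [a, c] <:+: (a :: T)) ⊆ {b} := by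
    intro c hc
    rcases hSigma c with rfl | rfl
    · exact absurd (Finset.mem_filter.mp hc).2 haa'
    · exact Finset.mem_singleton_self c
  exact (Finset.card_le_card hsub).trans_lt (by simp)

/-- Lemma 2: binary alphabet `{a,b}`, `T` contains both letters.
If `a` is not maximal in `T`, `a` is maximal in `aT`, and some maximal
`x ∈ M(T) \ {ε, T}` has `ax ∉ M(T)` and `ax ∈ M(aT)`, then the number of
distinct characters `c` with `ac` a substring of `aT` is less than `2`. -/
theorem stmt6 {α : Type*} [DecidableEq α] (a b : α) (hab : a ≠ b)
    (hSigma : ∀ c : α, c = a ∨ c = b)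
    (T : List α) (haT : a ∈ T) (hbT : b ∈ T)
    (h1 : ¬ MaximalSubstr [a] T) (h2 : MaximalSubstr [a] (a :: T))
    (h3 : ∃ x : List α, MaximalSubstr x T ∧ x ≠ [] ∧ x ≠ T ∧
      ¬ MaximalSubstr (a :: x) T ∧ MaximalSubstr (a :: x) (a :: T)) :
    ((a :: T).toFinset.filter (fun c => [a, c] <:+: (a :: T))).card < 2 :=
  stmt6_general a b hSigma T h1 h3
end

section
/- Let Σ have size at least 3 and let T be a string containing at least three distinct characters including a. If a is not maximal in T and a is maximal in aT, then the number of distinct characters c with ac a substring of aT is strictly less than the number of distinct characters occurring in T. -/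
/-- Infix characterization of `[a,c]` in `a :: T`. -/
lemma infix_pair_cons {α : Type*} {a c : α} {T : List α} :
    [a, c] <:+: (a :: T) ↔ T.head? = some c ∨ [a, c] <:+: T := by
  constructor
  · rintro ⟨s, t, h⟩
    cases s with
    | nil =>
      simp only [List.nil_append, List.cons_append, List.cons.injEq] at h
      left
      rw [← h.2]
      rfl
    | cons x s' =>
      right
      simp only [List.cons_append, List.cons.injEq] at h
      exact ⟨s', t, h.2⟩
  · rintro (h | h)
    · cases T with
      | nil => simp at h
      | cons y t =>
        simp only [List.head?_cons, Option.some.injEq] at h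
        exact ⟨[], t, by simp [h]⟩
    · obtain ⟨s, t, h⟩ := h
      exact ⟨a :: s, t, by simp [h]⟩

/-- First occurrence decomposition. -/
lemma first_occ {α : Type*} [DecidableEq α] {a : α} {T : List α} (h : a ∈ T) :
    ∃ s t, T = s ++ a :: t ∧ a ∉ s := by
  induction T with
  | nil => simp at h
  | cons x T ih =>
    by_cases hx : x = a
    · exact ⟨[], T, by simp [hx], by simp⟩
    · have hm : a ∈ T := by
        rcases List.mem_cons.mp h with h' | h'
        · exact absurd h'.symm hx
        · exact h'
      obtain ⟨s, t, hst, has⟩ := ih hm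
      refine ⟨x :: s, t, by simp [hst], ?_⟩
      simp only [List.mem_cons, not_or]
      exact ⟨fun h' => hx h'.symm, has⟩

/-- Lemma 3: `T` contains at least three distinct characters,
one of which is `a`. If `a` is not maximal in `T` and `a` is maximal in
`aT`, then the number of distinct characters `c` with `ac` a substring of
`aT` is strictly less than the number of distinct characters of `T`. -/
theorem stmt7 {α : Type*} [DecidableEq α] (a : α) (T : List α)
    (haT : a ∈ T) (hcard : 3 ≤ T.toFinset.card)
    (h1 : ¬ MaximalSubstr [a] T) (h2 : MaximalSubstr [a] (a :: T)) :
    ((a :: T).toFinset.filter (fun c => [a, c] <:+: (a :: T))).card <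
      T.toFinset.card := by
  have hset : (a :: T).toFinset = T.toFinset := by
    simp [List.toFinset_cons, Finset.insert_eq_self.mpr (List.mem_toFinset.mpr haT)]
  rw [MaximalSubstr, not_and_or] at h1
  rcases h1 with hL | hR
  · -- not left-maximal in T
    rw [LeftMaximal, not_or] at hL
    obtain ⟨hnp, hnd⟩ := hL
    push_neg at hnd
    obtain ⟨s, t, hst, has⟩ := first_occ haT
    have hsne : s ≠ [] := by
      rintro rfl
      exact hnp ⟨t, by simpa using hst.symm⟩
    -- head of T is not a
    have hhead : T.head? ≠ some a := by
      cases s with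
      | nil => exact absurd rfl hsne
      | cons x s' =>
        rw [hst]
        simp only [List.cons_append, List.head?_cons, Option.some.injEq]
        intro h
        injection h with h
        exact has (by simp [h])
    -- last char of s precedes a, and it's not a
    obtain ⟨s', p, rfl⟩ := (s.eq_nil_or_concat).resolve_left hsne
    have hpa : p ≠ a := fun h => has (by simp [h])
    have hpinf : [p, a] <:+: T := ⟨s', t, by rw [hst]; simp⟩
    have hnotaa : ¬ [a, a] <:+: T := by
      intro h
      have : a = p := by
        by_contra hne
        exact hnd a p hne h hpinf
      exact hpa this.symm
    -- so a is not in the filter set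
    have hanotin : a ∉ (a :: T).toFinset.filter (fun c => [a, c] <:+: (a :: T)) := by
      simp only [Finset.mem_filter, not_and]
      intro _ hinf
      rcases infix_pair_cons.mp hinf with h | h
      · exact hhead h
      · exact hnotaa h
    have hssub : (a :: T).toFinset.filter (fun c => [a, c] <:+: (a :: T)) ⊂ T.toFinset := by
      rw [← hset]
      exact Finset.ssubset_iff_of_subset (Finset.filter_subset _ _) |>.mpr
        ⟨a, by simp [hset, haT], hanotin⟩
    exact Finset.card_lt_card hssub
  · -- not right-maximal in T
    rw [RightMaximal, not_or] at hR
    obtain ⟨-, hnd⟩ := hR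
    push_neg at hnd
    have huniq : ∀ c d : α, [a, c] <:+: T → [a, d] <:+: T → c = d := by
      intro c d h1 h2
      by_contra hne
      exact hnd c d hne (by simpa using h1) (by simpa using h2)
    obtain ⟨y, t2, rfl⟩ := List.exists_cons_of_ne_nil (List.ne_nil_of_mem haT)
    have hle2 : ((a :: y :: t2).toFinset.filter
        (fun c => [a, c] <:+: (a :: y :: t2))).card ≤ 2 := by
      by_cases hE : ∃ c₀, [a, c₀] <:+: (y :: t2)
      · obtain ⟨c₀, hc₀⟩ := hE
        have hsub : (a :: y :: t2).toFinset.filter (fun c => [a, c] <:+: (a :: y :: t2))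
            ⊆ insert y {c₀} := by
          intro c hc
          simp only [Finset.mem_filter] at hc
          rcases infix_pair_cons.mp hc.2 with h | h
          · simp only [List.head?_cons, Option.some.injEq] at h
            simp [h]
          · simp [huniq c c₀ h hc₀]
        calc _ ≤ (insert y ({c₀} : Finset α)).card := Finset.card_le_card hsub
          _ ≤ 2 := by
            apply (Finset.card_insert_le _ _).trans
            simp
      · have hsub : (a :: y :: t2).toFinset.filter (fun c => [a, c] <:+: (a :: y :: t2))
            ⊆ {y} := by
          intro c hc
          simp only [Finset.mem_filter] at hc
          rcases infix_pair_cons.mp hc.2 with h | h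
          · simp only [List.head?_cons, Option.some.injEq] at h
            simp [h]
          · exact absurd ⟨c, h⟩ hE
        calc _ ≤ ({y} : Finset α).card := Finset.card_le_card hsub
          _ ≤ 2 := by simp
    omega
end

section
/- Let T be a string, a a character, T' = aT. For any string y that is maximal in both T and T', the number of distinct characters c with yc a substring of T' is at most one more than the number of distinct characters c with yc a substring of T; moreover the increase by one happens only if y is a prefix of aT and y·T[|y|] occurs in aT only as a prefix. -/
/-- Lemma 5, first part: for `y` maximal in both `T` and `aT`,
the number of right-extensions of `y` in `aT` is at most one more than in
`T`; and the increase by one happens only if `y` is a prefix of `aT` and the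
corresponding extension `y·b` occurs in `aT` only as a prefix. -/
theorem stmt8 {α : Type*} [DecidableEq α] (T y : List α) (a : α)
    (h1 : MaximalSubstr y T) (h2 : MaximalSubstr y (a :: T)) :
    (((a :: T).toFinset.filter (fun c => (y ++ [c]) <:+: (a :: T))).card ≤
      (T.toFinset.filter (fun c => (y ++ [c]) <:+: T)).card + 1) ∧
    (((a :: T).toFinset.filter (fun c => (y ++ [c]) <:+: (a :: T))).card =
        (T.toFinset.filter (fun c => (y ++ [c]) <:+: T)).card + 1 →
      y <+: (a :: T) ∧
        ∃ b : α, (y ++ [b]) <+: (a :: T) ∧ ¬ (y ++ [b]) <:+: T) := by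
  classical
  set S := T.toFinset.filter (fun c => (y ++ [c]) <:+: T) with hS
  set S' := (a :: T).toFinset.filter (fun c => (y ++ [c]) <:+: (a :: T)) with hS'
  have hsub : S ⊆ S' := by
    intro c hc
    simp only [hS, hS', Finset.mem_filter, List.mem_toFinset] at hc ⊢
    exact ⟨List.mem_cons_of_mem _ hc.1, hc.2.trans (List.suffix_cons a T).isInfix⟩
  by_cases hex : ∃ b : α, (y ++ [b]) <+: (a :: T) ∧ ¬ (y ++ [b]) <:+: T
  · obtain ⟨b, hb1, hb2⟩ := hex
    have hsub' : S' ⊆ insert b S := by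
      intro c hc
      simp only [hS', Finset.mem_filter, List.mem_toFinset] at hc
      by_cases hcT : (y ++ [c]) <:+: T
      · have : c ∈ T := hcT.subset (by simp)
        exact Finset.mem_insert_of_mem (by simp [hS, this, hcT])
      · have hpre : (y ++ [c]) <+: (a :: T) := by
          rcases List.infix_cons_iff.mp hc.2 with h | h
          · exact h
          · exact absurd h hcT
        have : y ++ [c] = y ++ [b] := by
          have hlen : (y ++ [c]).length = (y ++ [b]).length := by simp
          exact (List.prefix_of_prefix_length_le hpre hb1 (le_of_eq hlen)).eq_of_length hlen
        simp only [List.append_cancel_left_eq, List.cons.injEq] at this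
        exact Finset.mem_insert.mpr (Or.inl this.1)
    have hcard : S'.card ≤ S.card + 1 :=
      le_trans (Finset.card_le_card hsub') (Finset.card_insert_le _ _)
    refine ⟨hcard, fun _ => ⟨?_, b, hb1, hb2⟩⟩
    exact ((y.prefix_append [b]).trans hb1)
  · push_neg at hex
    have hsub' : S' ⊆ S := by
      intro c hc
      simp only [hS', Finset.mem_filter, List.mem_toFinset] at hc
      have hcT : (y ++ [c]) <:+: T := by
        rcases List.infix_cons_iff.mp hc.2 with h | h
        · exact hex c h
        · exact h
      have : c ∈ T := hcT.subset (by simp)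
      simp [hS, this, hcT]
    have heq : S' = S := le_antisymm hsub' hsub
    rw [heq]
    exact ⟨Nat.le_succ _, fun h => absurd h (by omega)⟩
end

section
/- Let T be a string and T' = aT. There is at most one string y maximal in both T and T' such that |{c : yc ∈ Substr(aT)}| = |{c : yc ∈ Substr(T)}| + 1. (Any two such strings would both be prefixes of aT, and the shorter being a prefix of the longer yields a contradiction.) -/
/-- An infix of `a :: T` that is not an infix of `T` must be a prefix. -/
lemma infix_cons_not_infix_prefix {α : Type*} {u T : List α} {a : α}
    (h : u <:+: (a :: T)) (h2 : ¬ u <:+: T) : u <+: (a :: T) := by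
  obtain ⟨s, t, hst⟩ := h
  cases s with
  | nil => exact ⟨t, by simpa using hst⟩
  | cons x s' =>
    exfalso
    apply h2
    refine ⟨s', t, ?_⟩
    simpa using congrArg List.tail hst

/-- A maximal substring is an infix. -/
lemma MaximalSubstr.infix {α : Type*} {u T : List α}
    (h : MaximalSubstr u T) : u <:+: T := by
  rcases h.1 with h | ⟨c, d, _, hc, _⟩
  · exact h.isInfix
  · exact (List.suffix_cons c u).isInfix.trans hc

/-- From the cardinality hypothesis, extract a new right-extension character. -/
lemma exists_new_char {α : Type*} [DecidableEq α] {T y : List α} {a : α}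
    (hy : ((a :: T).toFinset.filter (fun c => (y ++ [c]) <:+: (a :: T))).card =
      (T.toFinset.filter (fun c => (y ++ [c]) <:+: T)).card + 1) :
    ∃ c : α, (y ++ [c]) <+: (a :: T) ∧ ¬ (y ++ [c]) <:+: T := by
  have hex : ∃ c, c ∈ (a :: T).toFinset.filter (fun c => (y ++ [c]) <:+: (a :: T)) ∧
      c ∉ T.toFinset.filter (fun c => (y ++ [c]) <:+: T) := by
    by_contra h
    push_neg at h
    have := Finset.card_le_card (fun c hc => h c hc)
    omega
  obtain ⟨c, hcA, hcB⟩ := hex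
  have hinf : (y ++ [c]) <:+: (a :: T) := (Finset.mem_filter.mp hcA).2
  have hnot : ¬ (y ++ [c]) <:+: T := by
    intro h
    exact hcB (Finset.mem_filter.mpr ⟨List.mem_toFinset.mpr
      (h.sublist.mem (by simp)), h⟩)
  exact ⟨c, infix_cons_not_infix_prefix hinf hnot, hnot⟩

/-- Lemma 5, uniqueness part: there is at most one string `y`
maximal in both `T` and `aT` whose number of right-extensions increases by
one from `T` to `aT`. -/
theorem stmt9 {α : Type*} [DecidableEq α] (T y z : List α) (a : α)
    (hy1 : MaximalSubstr y T) (hy2 : MaximalSubstr y (a :: T))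
    (hz1 : MaximalSubstr z T) (hz2 : MaximalSubstr z (a :: T))
    (hy : ((a :: T).toFinset.filter (fun c => (y ++ [c]) <:+: (a :: T))).card =
      (T.toFinset.filter (fun c => (y ++ [c]) <:+: T)).card + 1)
    (hz : ((a :: T).toFinset.filter (fun c => (z ++ [c]) <:+: (a :: T))).card =
      (T.toFinset.filter (fun c => (z ++ [c]) <:+: T)).card + 1) :
    y = z := by
  obtain ⟨c, hcp, hcn⟩ := exists_new_char hy
  obtain ⟨d, hdp, hdn⟩ := exists_new_char hz
  have hyinf : y <:+: T := hy1.infix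
  have hzinf : z <:+: T := hz1.infix
  have hzp : z <+: (a :: T) := (List.prefix_append z [d]).trans hdp
  have hyp : y <+: (a :: T) := (List.prefix_append y [c]).trans hcp
  have h1 : ¬ y.length < z.length := by
    intro hlt
    apply hcn
    have : (y ++ [c]) <+: z := by
      apply List.prefix_of_prefix_length_le hcp hzp
      simpa using hlt
    exact this.isInfix.trans hzinf
  have h2 : ¬ z.length < y.length := by
    intro hlt
    apply hdn
    have : (z ++ [d]) <+: y := by
      apply List.prefix_of_prefix_length_le hdp hyp
      simpa using hlt
    exact this.isInfix.trans hyinf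
  have hlen : y.length = z.length := by omega
  have heq : y ++ [c] = z ++ [d] := by
    have h := List.prefix_of_prefix_length_le hcp hdp (by simp [hlen])
    exact h.eq_of_length (by simp [hlen])
  exact (List.append_inj' heq rfl).1
end

section
/- Let T = aS and suppose x is maximal in S but not maximal in aS. Then x is a prefix of S and ax is maximal in aS; moreover EndPos(ax, aS) = EndPos(x, S) shifted appropriately, so the set of characters that can follow x in S equals the set of characters that can follow ax in aS. -/
/-- Lemma 7: let `T = aS`. If `x` is maximal in `S` but not
maximal in `aS`, then `x` is a prefix of `S`, `ax` is maximal in `aS`, the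
end-positions of `ax` in `aS` are exactly those of `x` in `S` shifted by one,
and the characters that can follow `ax` in `aS` are exactly the characters
that can follow `x` in `S`. -/
theorem stmt11 {α : Type*} (S x : List α) (a : α)
    (h1 : MaximalSubstr x S) (h2 : ¬ MaximalSubstr x (a :: S)) :
    x <+: S ∧ MaximalSubstr (a :: x) (a :: S) ∧
      EndPos (a :: x) (a :: S) = (fun i => i + 1) '' EndPos x S ∧
      ∀ c : α, ((a :: x) ++ [c]) <:+: (a :: S) ↔ (x ++ [c]) <:+: S := by
  obtain ⟨hL, hR⟩ := h1
  have hRS : RightMaximal x (a :: S) := by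
    rcases hR with h | ⟨c, d, hcd, hc, hd⟩
    · exact Or.inl (h.trans (List.suffix_cons a S))
    · exact Or.inr ⟨c, d, hcd, List.infix_cons hc, List.infix_cons hd⟩
  have hNL : ¬ LeftMaximal x (a :: S) := fun h => h2 ⟨h, hRS⟩
  have hnp : ¬ (x <+: a :: S) := fun h => hNL (Or.inl h)
  have hnd : ∀ c d : α, (c :: x) <:+: (a :: S) → (d :: x) <:+: (a :: S) → c = d := by
    intro c d hc hd
    by_contra h
    exact hNL (Or.inr ⟨c, d, h, hc, hd⟩)
  have hx : x <+: S := by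
    rcases hL with h | ⟨c, d, hcd, hc, hd⟩
    · exact h
    · exact absurd (Or.inr ⟨c, d, hcd, List.infix_cons hc, List.infix_cons hd⟩) hNL
  have hax : (a :: x) <+: (a :: S) := (List.cons_prefix_cons).2 ⟨rfl, hx⟩
  have haxi : (a :: x) <:+: (a :: S) := hax.isInfix
  have hK : ∀ b, (b :: x) <:+: (a :: S) → b = a := fun b h => hnd b a h haxi
  -- occurrence lemma: any occurrence of x in aS is preceded by a
  have hocc : ∀ s t : List α, a :: S = s ++ x ++ t → ∃ s', s = s' ++ [a] := by
    intro s t h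
    have hs : s ≠ [] := by
      rintro rfl
      exact hnp ⟨t, by simpa using h.symm⟩
    obtain ⟨s', b, rfl⟩ := (List.eq_nil_or_concat s).resolve_left hs
    have hb : (b :: x) <:+: (a :: S) := ⟨s', t, by simp [h, List.concat_eq_append]⟩
    obtain rfl : b = a := hK b hb
    exact ⟨s', by simp [List.concat_eq_append]⟩
  -- lifting lemma
  have hlift : ∀ c : α, (x ++ [c]) <:+: S → ((a :: x) ++ [c]) <:+: (a :: S) := by
    intro c ⟨s, t, h⟩
    obtain ⟨s', hs'⟩ := hocc (a :: s) ([c] ++ t) (by simp [← h])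
    refine ⟨s', t, ?_⟩
    have : a :: S = (a :: s) ++ (x ++ [c]) ++ t := by simp [← h]
    rw [this, hs']; simp
  have hdrop : ∀ c : α, ((a :: x) ++ [c]) <:+: (a :: S) → (x ++ [c]) <:+: S := by
    rintro c ⟨s, t, h⟩
    cases s with
    | nil => exact ⟨[], t, by simpa using h⟩
    | cons b s' =>
      refine ⟨s' ++ [a], t, ?_⟩
      have := List.tail_eq_of_cons_eq h.symm
      simp at this ⊢
      simp [this]
  refine ⟨hx, ⟨Or.inl hax, ?_⟩, ?_, fun c => ⟨hdrop c, hlift c⟩⟩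
  · -- RightMaximal (a::x) (a::S)
    rcases hR with ⟨s, h⟩ | ⟨c, d, hcd, hc, hd⟩
    · obtain ⟨s', hs'⟩ := hocc (a :: s) [] (by simp [← h])
      exact Or.inl ⟨s', by rw [show a :: S = (a :: s) ++ x by simp [← h], hs']; simp⟩
    · exact Or.inr ⟨c, d, hcd, hlift c hc, hlift d hd⟩
  · -- EndPos
    ext i
    simp only [EndPos, Set.mem_setOf_eq, Set.mem_image, List.length_cons]
    constructor
    · rintro ⟨hi1, hi2, hsfx⟩
      obtain ⟨j, rfl⟩ : ∃ j, i = j + 1 := ⟨i - 1, by omega⟩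
      refine ⟨j, ⟨by omega, by omega, ?_⟩, rfl⟩
      rw [List.take_succ_cons] at hsfx
      obtain ⟨t, ht⟩ := hsfx
      cases t with
      | nil => exact (List.tail_eq_of_cons_eq ht) ▸ List.suffix_refl x
      | cons b t' =>
        have hrest : t' ++ a :: x = S.take j := by
          simpa using List.tail_eq_of_cons_eq ht
        exact ⟨t' ++ [a], by rw [← hrest]; simp⟩
    · rintro ⟨j, ⟨hj1, hj2, hsfx⟩, rfl⟩
      refine ⟨by omega, by omega, ?_⟩
      rw [List.take_succ_cons]
      obtain ⟨t, ht⟩ := hsfx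
      obtain ⟨s', hs'⟩ := hocc (a :: t) (S.drop j) (by
        have h1 : t ++ x ++ S.drop j = S := by rw [ht]; simp
        calc a :: S = a :: (t ++ x ++ S.drop j) := by rw [h1]
          _ = (a :: t) ++ x ++ S.drop j := by simp)
      refine ⟨s', ?_⟩
      rw [show a :: S.take j = (a :: t) ++ x by simp [ht], hs']; simp
end

section
/- Let S be a string and a,b characters. If x ≠ S, x is not maximal in aS, x is maximal in S, and x is maximal in bS, then bx is not maximal in bS. -/
/-- Lemma 8: if `x ≠ S`, `x` is not maximal in `aS`, `x` is
maximal in `S`, and `x` is maximal in `bS`, then `bx` is not maximal in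
`bS`. -/
theorem stmt12 {α : Type*} (S x : List α) (a b : α)
    (hx : x ≠ S)
    (h1 : ¬ MaximalSubstr x (a :: S)) (h2 : MaximalSubstr x S) (h3 : MaximalSubstr x (b :: S)) :
    ¬ MaximalSubstr (b :: x) (b :: S) := by
  obtain ⟨hL2, hR2⟩ := h2
  have hSinf : S <:+: (a :: S) := (List.suffix_cons a S).isInfix
  have hRa : RightMaximal x (a :: S) := by
    rcases hR2 with h | ⟨c, d, hcd, hc, hd⟩
    · exact Or.inl (h.trans (List.suffix_cons a S))
    · exact Or.inr ⟨c, d, hcd, hc.trans hSinf, hd.trans hSinf⟩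
  have hnLa : ¬ LeftMaximal x (a :: S) := fun h => h1 ⟨h, hRa⟩
  have hxpre : x <+: S := by
    rcases hL2 with h | ⟨c, d, hcd, hc, hd⟩
    · exact h
    · exact absurd (Or.inr ⟨c, d, hcd, hc.trans hSinf, hd.trans hSinf⟩) hnLa
  have hax : (a :: x) <:+: (a :: S) :=
    (List.cons_prefix_cons.mpr ⟨rfl, hxpre⟩).isInfix
  have hba : b ≠ a := by rintro rfl; exact h1 h3
  have key : ∀ c, (c :: x) <:+: S → c = a := by
    intro c hc
    by_contra hne
    exact hnLa (Or.inr ⟨c, a, hne, hc.trans hSinf, hax⟩)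
  have hbxS : ¬ (b :: x) <:+: S := fun h => hba (key b h)
  rintro ⟨hLb, hRb⟩
  rcases hRb with h | ⟨c, d, hcd, hc, hd⟩
  · rcases List.suffix_cons_iff.mp h with h' | h'
    · exact hx (List.cons_injective.eq_iff.mp h')
    · exact hbxS h'.isInfix
  · have pref : ∀ e, ((b :: x) ++ [e]) <:+: (b :: S) → (x ++ [e]) <+: S := by
      intro e he
      rcases List.infix_cons_iff.mp he with h' | h'
      · exact (List.cons_prefix_cons.mp h').2
      · exact absurd ((List.prefix_append (b :: x) [e]).isInfix.trans h') hbxS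
    have hc' := pref c hc
    have hd' := pref d hd
    have hlen : (x ++ [c]).length ≤ (x ++ [d]).length := by simp
    have := (List.prefix_of_prefix_length_le hc' hd' hlen).eq_of_length (by simp)
    exact hcd (by simpa using List.append_cancel_left this)
end

section
/- Let S be a string and a,b characters. If ax is maximal in aS, x is not maximal in aS, bax is not maximal in aS, x is maximal in S, and bax is not maximal in S, then bax is not maximal in bS. -/
theorem infix_cons_lift {α : Type*} {u T : List α} (c : α) (h : u <:+: T) :
    u <:+: (c :: T) := List.infix_cons h

/-- Lemma 9: if `ax` is maximal in `aS`, `x` is not maximal in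
`aS`, `bax` is not maximal in `aS`, `x` is maximal in `S`, and `bax` is not
maximal in `S`, then `bax` is not maximal in `bS`. -/
theorem stmt13 {α : Type*} (S x : List α) (a b : α)
    (h1 : MaximalSubstr (a :: x) (a :: S)) (h2 : ¬ MaximalSubstr x (a :: S))
    (h3 : ¬ MaximalSubstr (b :: a :: x) (a :: S))
    (h4 : MaximalSubstr x S) (h5 : ¬ MaximalSubstr (b :: a :: x) S) :
    ¬ MaximalSubstr (b :: a :: x) (b :: S) := by
  by_cases hba : b = a
  · subst hba; exact h3
  -- x is right-maximal in a::S
  have hRx : RightMaximal x (a :: S) := by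
    rcases h4.2 with h | ⟨c, d, hcd, hc, hd⟩
    · exact Or.inl (h.trans (List.suffix_cons a S))
    · exact Or.inr ⟨c, d, hcd, infix_cons_lift a hc, infix_cons_lift a hd⟩
  have hnLx : ¬ LeftMaximal x (a :: S) := fun h => h2 ⟨h, hRx⟩
  have hxS : x <+: S := by
    rcases h4.1 with h | ⟨c, d, hcd, hc, hd⟩
    · exact h
    · exact absurd (Or.inr ⟨c, d, hcd, infix_cons_lift a hc, infix_cons_lift a hd⟩) hnLx
  have hxaS : ¬ x <+: (a :: S) := fun h => hnLx (Or.inl h)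
  have hkey : ¬ ((a :: x) <+: S) := by
    intro h
    have hx_ax : x <+: (a :: x) :=
      List.prefix_of_prefix_length_le hxS h (by simp)
    cases x with
    | nil => exact hxaS (List.nil_prefix)
    | cons y t =>
      obtain ⟨rfl, ht⟩ := List.cons_prefix_cons.mp hx_ax
      exact hxaS (List.cons_prefix_cons.mpr ⟨rfl, ht.trans hxS⟩)
  intro h6
  obtain ⟨hL, hR⟩ := h6
  have hLS : LeftMaximal (b :: a :: x) S := by
    rcases hL with h | ⟨c, d, hcd, hc, hd⟩
    · exact absurd (List.cons_prefix_cons.mp h).2 hkey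
    · have key : ∀ e : α, (e :: b :: a :: x) <:+: (b :: S) →
          ((b :: a :: x) <+: S ∨ (e :: b :: a :: x) <:+: S) := by
        intro e h
        rcases List.infix_cons_iff.mp h with hp | hi
        · exact Or.inl (List.cons_prefix_cons.mp hp).2
        · exact Or.inr hi
      rcases key c hc with h | hc'
      · exact Or.inl h
      rcases key d hd with h | hd'
      · exact Or.inl h
      exact Or.inr ⟨c, d, hcd, hc', hd'⟩
  have hRS : RightMaximal (b :: a :: x) S := by
    rcases hR with h | ⟨c, d, hcd, hc, hd⟩
    · rcases List.suffix_cons_iff.mp h with he | hs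
      · exfalso
        apply hkey
        have : a :: x = S := by
          have := List.cons.injEq b (a :: x) b S ▸ he
          exact (List.cons.inj he).2
        exact this ▸ List.prefix_rfl
      · exact Or.inl hs
    · have key : ∀ e : α, ((b :: a :: x) ++ [e]) <:+: (b :: S) →
          ((b :: a :: x) ++ [e]) <:+: S := by
        intro e h
        rcases List.infix_cons_iff.mp h with hp | hi
        · exfalso
          apply hkey
          have hp' : (b :: ((a :: x) ++ [e])) <+: (b :: S) := by simpa using hp
          have h2' := (List.cons_prefix_cons.mp hp').2
          exact (List.prefix_append (a :: x) [e]).trans h2'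
        · exact hi
      exact Or.inr ⟨c, d, hcd, key c hc, key d hd⟩
  exact h5 ⟨hLS, hRS⟩
end

section
/- For T = (ab)^{m+1} c (ab)^m and T' = T with its first character deleted, i.e., T' = b(ab)^m c (ab)^m, the CDAWG edge counts satisfy e(T) = 2m+3 and e(T') = 4m+2, hence e(T') − e(T) = e(T) − 4. -/
/-- Out-degree of node `x` in `CDAWG(T)`: the number of distinct characters `c`
with `xc` a substring of `T` (and `0` for the sink `T` itself). -/
noncomputable def D {α : Type*} [DecidableEq α] (T x : List α) : ℕ :=
  if x = T then 0 else (T.toFinset.filter (fun c => (x ++ [c]) <:+: T)).card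

open scoped Classical in
/-- Number of edges of `CDAWG(T)`: the total out-degree over all maximal
substrings of `T`. -/
noncomputable def cdawgSize {α : Type*} [DecidableEq α] (T : List α) : ℕ :=
  ∑ x ∈ T.sublists.toFinset.filter (fun x => x <:+: T ∧ MaximalSubstr x T), D T x

/-- `(ab)^k`, the string `ab` repeated `k` times. -/
def abPow {α : Type*} (a b : α) (k : ℕ) : List α :=
  (List.replicate k [a, b]).flatten

/-!
The letter `c` occurs exactly once in `T` and in `T'`, so a maximal substring containing it has a
single occurrence and must be the whole text. Both texts satisfy "a letter is `a` iff the next one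
is `b`". Hence a `c`-free substring that is left-maximal but not a prefix cannot start with `b`, and
one that is right-maximal but not a suffix cannot end with `a`; together with the alternation this
forces it to be `(ab)^k`, or `b(ab)^k` when it starts with `b` in `T'`. The length of the `c`-free
blocks bounds `k`, and the block left of `c` is not right-maximal because only `c` follows it.
Each `(ab)^k` and `b(ab)^k` with `k ≥ 1` has out-edges `a` and `c` only, except `(ab)^m` in `T'`,
which only continues with `c`; the source has three. So `e(T) = 3 + 2m` and
`e(T') = 3 + 2(m - 1) + 1 + 2m`.
-/

open List

section

variable {α : Type*}

section abPow

variable (a b : α)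

@[simp] theorem abPow_zero : abPow a b 0 = [] := rfl

@[simp] theorem abPow_succ (k : ℕ) : abPow a b (k + 1) = a :: b :: abPow a b k := by
  simp [abPow, replicate_succ]

theorem abPow_add (j k : ℕ) : abPow a b (j + k) = abPow a b j ++ abPow a b k := by
  simp only [abPow, replicate_add, flatten_append]

theorem abPow_succ' (k : ℕ) : abPow a b (k + 1) = abPow a b k ++ [a, b] := by
  rw [abPow_add]
  rfl

@[simp] theorem length_abPow (k : ℕ) : (abPow a b k).length = 2 * k := by
  simp [abPow, Nat.mul_comm]

theorem abPow_injective : Function.Injective (abPow a b) := fun j k h => by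
  simpa using congrArg length h

theorem mem_abPow {x : α} {k : ℕ} : x ∈ abPow a b k ↔ 0 < k ∧ (x = a ∨ x = b) := by
  simp [abPow]

theorem count_abPow [DecidableEq α] (x : α) (k : ℕ) :
    (abPow a b k).count x = k * [a, b].count x := by
  simp [abPow, count_flatten]

theorem getLast?_abPow_succ (k : ℕ) : (abPow a b (k + 1)).getLast? = some b := by
  rw [abPow_succ']
  simp

theorem getLast?_cons_abPow (k : ℕ) : (b :: abPow a b k).getLast? = some b := by
  cases k with
  | zero => rfl
  | succ k => rw [getLast?_cons, getLast?_abPow_succ]; rfl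

variable {a b}

theorem abPow_prefix_abPow {j k : ℕ} (h : j ≤ k) : abPow a b j <+: abPow a b k := by
  obtain ⟨d, rfl⟩ := Nat.exists_eq_add_of_le h
  rw [abPow_add]
  exact prefix_append _ _

theorem abPow_suffix_abPow {j k : ℕ} (h : j ≤ k) : abPow a b j <:+ abPow a b k := by
  obtain ⟨d, rfl⟩ := Nat.exists_eq_add_of_le' h
  rw [abPow_add]
  exact suffix_append _ _

theorem abPow_append_prefix_abPow {j k : ℕ} (h : j < k) : abPow a b j ++ [a] <+: abPow a b k :=
  IsPrefix.trans ⟨[b], by rw [abPow_succ']; simp⟩ (abPow_prefix_abPow h)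

end abPow

section Chain

variable {R : α → α → Prop} {W x : List α} {y z : α}

theorem List.IsChain.rel_of_cons_infix (hW : IsChain R W) (hx : x.head? = some z)
    (h : y :: x <:+: W) : R y z := by
  obtain ⟨t, rfl⟩ := head?_eq_some_iff.1 hx
  exact isChain_pair.1 (hW.infix ((infix_append [] [y, z] t).trans h))

theorem List.IsChain.rel_of_append_infix (hW : IsChain R W) (hx : x.getLast? = some z)
    (h : x ++ [y] <:+: W) : R z y := by
  obtain ⟨t, rfl⟩ := getLast?_eq_some_iff.1 hx
  exact isChain_pair.1 (hW.infix ((infix_append t [z, y] []).trans (by simpa using h)))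

variable {a b : α}

theorem head?_ne_of_isChain_cons (hab : a ≠ b) (h : IsChain (fun x y => x = a ↔ y = b) (b :: x)) :
    x.head? ≠ some b := fun hx =>
  hab ((h.rel_of_cons_infix hx (infix_refl _)).2 rfl).symm

theorem isChain_cons_abPow_append (hab : a ≠ b) {l : List α}
    (hl : IsChain (fun x y => x = a ↔ y = b) l) (hlb : l.head? ≠ some b) :
    ∀ (k : ℕ) {x : α}, x ≠ a → IsChain (fun x y => x = a ↔ y = b) (x :: (abPow a b k ++ l))
  | 0, _, hx => hl.cons fun _ hy => iff_of_false hx fun h => hlb (h ▸ hy)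
  | k + 1, x, hx => by
    simp only [abPow_succ, cons_append, isChain_cons_cons]
    exact ⟨by simp [hx, hab], by simp, isChain_cons_abPow_append hab hl hlb k hab.symm⟩

theorem exists_eq_abPow_of_isChain (hab : a ≠ b) :
    ∀ {u : List α}, IsChain (fun x y => x = a ↔ y = b) u → (∀ x ∈ u, x = a ∨ x = b) →
      u.head? ≠ some b → u.getLast? ≠ some a → ∃ j, u = abPow a b j
  | [], _, _, _, _ => ⟨0, rfl⟩
  | [x], _, hmem, hhead, hlast => by
    simp only [head?_cons, getLast?_singleton, ne_eq, Option.some.injEq] at hhead hlast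
    exact ((hmem x (mem_singleton_self x)).elim hlast hhead).elim
  | x :: y :: w, hchain, hmem, hhead, hlast => by
    have hx : x = a := (hmem x mem_cons_self).resolve_right fun h => hhead (by rw [h]; rfl)
    subst x
    have hy : y = b := (isChain_cons_cons.1 hchain).1.1 rfl
    subst y
    obtain ⟨j, rfl⟩ : ∃ j, w = abPow a b j := by
      refine exists_eq_abPow_of_isChain hab hchain.tail.tail (fun z hz => hmem z (by simp [hz]))
        (head?_ne_of_isChain_cons hab hchain.tail) ?_
      cases w with
      | nil => simp
      | cons z w => simpa using hlast
    exact ⟨j + 1, rfl⟩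

end Chain

section Maximality

variable {a b : α} {W u : List α}

theorem LeftMaximal.head?_ne (h : LeftMaximal u W) (hW : IsChain (fun x y => x = a ↔ y = b) W)
    (hWb : W.head? ≠ some b) : u.head? ≠ some b := by
  intro hu
  rcases h with hp | ⟨x, y, hxy, hx, hy⟩
  · obtain ⟨t, rfl⟩ := head?_eq_some_iff.1 hu
    exact hWb (singleton_prefix_iff_head?_eq_some.1 ((prefix_append [b] t).trans hp))
  · exact hxy (((hW.rel_of_cons_infix hu hx).2 rfl).trans ((hW.rel_of_cons_infix hu hy).2 rfl).symm)

theorem RightMaximal.getLast?_ne (h : RightMaximal u W)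
    (hW : IsChain (fun x y => x = a ↔ y = b) W) (hWa : W.getLast? ≠ some a) :
    u.getLast? ≠ some a := by
  intro hu
  rcases h with hs | ⟨x, y, hxy, hx, hy⟩
  · obtain ⟨t, rfl⟩ := getLast?_eq_some_iff.1 hu
    exact hWa (singleton_suffix_iff_getLast?_eq_some.1 ((suffix_append t [a]).trans hs))
  · exact hxy (((hW.rel_of_append_infix hu hx).1 rfl).trans
      ((hW.rel_of_append_infix hu hy).1 rfl).symm)

variable [DecidableEq α] {c : α}

theorem append_inj_of_count_eq_one {s₁ s₂ t₁ t₂ : List α} (hW : W.count c = 1) (hc : c ∈ u)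
    (h₁ : s₁ ++ u ++ t₁ = W) (h₂ : s₂ ++ u ++ t₂ = W) : s₁ = s₂ ∧ t₁ = t₂ := by
  have idxOf_eq : ∀ {s t}, s ++ u ++ t = W → W.idxOf c = s.length + u.idxOf c := by
    intro s t h
    have hs : c ∉ s := by
      subst h
      simp only [count_append] at hW
      have := count_pos_iff.2 hc
      rw [← count_eq_zero]
      omega
    rw [← h, append_assoc, idxOf_append_of_notMem hs, idxOf_append_of_mem hc]
  have hlen : s₁.length = s₂.length := by
    have := idxOf_eq h₁
    have := idxOf_eq h₂
    omega
  rw [append_assoc] at h₁ h₂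
  obtain ⟨hs, hut⟩ := append_inj (h₁.trans h₂.symm) hlen
  exact ⟨hs, append_cancel_left hut⟩

theorem LeftMaximal.prefix_of_count_eq_one (h : LeftMaximal u W) (hW : W.count c = 1)
    (hc : c ∈ u) : u <+: W := by
  refine h.resolve_right ?_
  rintro ⟨x, y, hxy, ⟨s₁, t₁, h₁⟩, ⟨s₂, t₂, h₂⟩⟩
  rw [← singleton_append, ← append_assoc] at h₁ h₂
  obtain ⟨hs, -⟩ := append_inj_of_count_eq_one hW hc h₁ h₂
  exact hxy (by simpa using congrArg getLast? hs)

theorem RightMaximal.suffix_of_count_eq_one (h : RightMaximal u W) (hW : W.count c = 1)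
    (hc : c ∈ u) : u <:+ W := by
  refine h.resolve_right ?_
  rintro ⟨x, y, hxy, ⟨s₁, t₁, h₁⟩, ⟨s₂, t₂, h₂⟩⟩
  rw [← append_assoc, append_assoc _ [x]] at h₁
  rw [← append_assoc, append_assoc _ [y]] at h₂
  obtain ⟨-, ht⟩ := append_inj_of_count_eq_one hW hc h₁ h₂
  exact hxy (by simpa using congrArg head? ht)

theorem MaximalSubstr.eq_of_count_eq_one (h : MaximalSubstr u W) (hW : W.count c = 1)
    (hc : c ∈ u) : u = W := by
  obtain ⟨t, ht⟩ := h.1.prefix_of_count_eq_one hW hc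
  obtain ⟨s, hs⟩ := h.2.suffix_of_count_eq_one hW hc
  obtain ⟨-, rfl⟩ := append_inj_of_count_eq_one hW hc (s₁ := []) (t₂ := []) (by simpa) (by simpa)
  simpa using ht

end Maximality

section Window

variable {u P S : List α} {c : α}

theorem eq_nil_of_prefix_cons_of_notMem (h : u <+: c :: S) (hc : c ∉ u) : u = [] :=
  (prefix_cons_iff.1 h).resolve_right fun ⟨_, hu, _⟩ => hc (hu ▸ mem_cons_self)

theorem infix_or_infix_of_infix_append_cons (h : u <:+: P ++ c :: S) (hc : c ∉ u) :
    u <:+: P ∨ u <:+: S := by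
  rcases infix_append_iff.1 h with hP | hcS | ⟨l₁, l₂, rfl, hl₁, hl₂⟩
  · exact Or.inl hP
  · rcases infix_cons_iff.1 hcS with hpre | hS
    · exact Or.inl (eq_nil_of_prefix_cons_of_notMem hpre hc ▸ nil_infix)
    · exact Or.inr hS
  · obtain rfl := eq_nil_of_prefix_cons_of_notMem hl₂ fun h' => hc (mem_append_right _ h')
    exact Or.inl (by simpa using hl₁.isInfix)

theorem length_le_of_infix_append_cons (h : u <:+: P ++ c :: S) (hc : c ∉ u)
    (hSP : S.length ≤ P.length) : u.length ≤ P.length := by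
  rcases infix_or_infix_of_infix_append_cons h hc with h | h
  · exact h.length_le
  · exact h.length_le.trans hSP

theorem append_singleton_infix_append_cons (h : u <:+ P) : u ++ [c] <:+: P ++ c :: S := by
  obtain ⟨s, rfl⟩ := h
  exact ⟨s, S, by simp⟩

theorem not_rightMaximal_append_cons (hc : c ∉ P) (hSP : S.length < P.length) :
    ¬ RightMaximal P (P ++ c :: S) := by
  rintro (hs | ⟨x, y, hxy, hx, hy⟩)
  · have hcS : c :: S <:+ P :=
      suffix_of_suffix_length_le (suffix_append P (c :: S)) hs (by simpa using hSP)
    exact hc (hcS.subset mem_cons_self)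
  · have ext_eq : ∀ z, P ++ [z] <:+: P ++ c :: S → z = c := by
      intro z hz
      by_contra hzc
      have := length_le_of_infix_append_cons hz (by simp [hc, Ne.symm hzc]) hSP.le
      simp at this
    exact hxy ((ext_eq x hx).trans (ext_eq y hy).symm)

end Window

section Counting

variable [DecidableEq α]

theorem D_eq_card {W x : List α} (hx : x ≠ W) {s : Finset α}
    (hs : ∀ y, y ∈ s ↔ x ++ [y] <:+: W) : D W x = s.card := by
  rw [D, if_neg hx]
  congr 1
  ext y
  rw [Finset.mem_filter, mem_toFinset, hs]
  exact ⟨fun h => h.2, fun h => ⟨h.subset (by simp), h⟩⟩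

theorem D_self (W : List α) : D W W = 0 := if_pos rfl

theorem D_nil_eq_three {a b c : α} (hab : a ≠ b) (hbc : b ≠ c) (hac : a ≠ c) {W : List α}
    (hW : ∀ y, y ∈ W ↔ y = a ∨ y = b ∨ y = c) : D W [] = 3 := by
  have hne : [] ≠ W := (ne_nil_of_mem ((hW a).2 (Or.inl rfl))).symm
  rw [D_eq_card hne (s := {a, b, c}), Finset.card_eq_three.2 ⟨a, b, c, hab, hac, hbc, rfl⟩]
  simp [singleton_infix_iff, hW]

theorem D_eq_two {a b c : α} (hab : a ≠ b) (hac : a ≠ c) {W x : List α}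
    (hW : IsChain (fun x y => x = a ↔ y = b) W) (hWmem : ∀ y ∈ W, y = a ∨ y = b ∨ y = c)
    (hx : x ≠ W) (hxb : x.getLast? = some b) (ha : x ++ [a] <:+: W) (hc : x ++ [c] <:+: W) :
    D W x = 2 := by
  rw [D_eq_card hx (s := {a, c}), Finset.card_pair hac]
  intro y
  simp only [Finset.mem_insert, Finset.mem_singleton]
  refine ⟨by rintro (rfl | rfl) <;> assumption, fun hy => ?_⟩
  have hyb : y ≠ b := fun h => hab ((hW.rel_of_append_infix hxb hy).2 h).symm
  rcases hWmem y (hy.subset (by simp)) with h | h | h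
  · exact Or.inl h
  · exact absurd h hyb
  · exact Or.inr h

theorem cdawgSize_eq_sum {W : List α} (s : Finset (List α))
    (hs : ∀ x, x ∈ s ↔ x <:+: W ∧ MaximalSubstr x W) : cdawgSize W = ∑ x ∈ s, D W x := by
  classical
  rw [cdawgSize]
  congr 1
  ext x
  rw [Finset.mem_filter, mem_toFinset, mem_sublists, hs]
  exact ⟨fun h => h.2, fun h => ⟨h.1.sublist, h⟩⟩

end Counting

section Words

variable {a b c : α} {m : ℕ}

local notation "𝐓" => abPow a b (m + 1) ++ c :: abPow a b m
local notation "𝐓'" => b :: abPow a b m ++ c :: abPow a b m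

theorem mem_T {x : α} : x ∈ 𝐓 ↔ x = a ∨ x = b ∨ x = c := by
  simp only [mem_append, mem_cons, mem_abPow, Nat.succ_pos, true_and]
  tauto

theorem mem_T' (hm : 1 ≤ m) {x : α} : x ∈ 𝐓' ↔ x = a ∨ x = b ∨ x = c := by
  simp only [mem_append, mem_cons, mem_abPow]
  tauto

theorem c_notMem_abPow (hbc : b ≠ c) (hac : a ≠ c) (k : ℕ) : c ∉ abPow a b k := by
  simp [mem_abPow, hac.symm, hbc.symm]

theorem count_T [DecidableEq α] (hbc : b ≠ c) (hac : a ≠ c) : 𝐓.count c = 1 := by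
  simp [count_abPow, hbc, hac]

theorem count_T' [DecidableEq α] (hbc : b ≠ c) (hac : a ≠ c) : 𝐓'.count c = 1 := by
  simp [count_abPow, hbc, hac]

theorem isChain_T' (hab : a ≠ b) (hbc : b ≠ c) (hac : a ≠ c) :
    IsChain (fun x y => x = a ↔ y = b) 𝐓' := by
  refine isChain_cons_abPow_append hab ?_ (by simp [hbc.symm]) m hab.symm
  simpa using isChain_cons_abPow_append hab .nil (by simp) m hac.symm

theorem isChain_T (hab : a ≠ b) (hbc : b ≠ c) (hac : a ≠ c) :
    IsChain (fun x y => x = a ↔ y = b) 𝐓 := by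
  rw [abPow_succ]
  exact (isChain_T' hab hbc hac).cons (by simp)

theorem getLast?_append_cons_abPow_ne (hab : a ≠ b) (hac : a ≠ c) (l : List α) :
    (l ++ c :: abPow a b m).getLast? ≠ some a := by
  rw [getLast?_append_cons]
  cases m with
  | zero => simpa using hac.symm
  | succ k => rw [getLast?_cons, getLast?_abPow_succ]; simpa using hab.symm

theorem forall_mem_of_infix_of_notMem {W u : List α} (hW : ∀ x ∈ W, x = a ∨ x = b ∨ x = c)
    (hu : u <:+: W) (hc : c ∉ u) : ∀ x ∈ u, x = a ∨ x = b := fun x hx =>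
  (hW x (hu.subset hx)).imp_right fun h => h.resolve_right fun hxc => hc (hxc ▸ hx)

theorem eq_of_maximalSubstr_T [DecidableEq α] (hab : a ≠ b) (hbc : b ≠ c) (hac : a ≠ c)
    {u : List α} (hu : u <:+: 𝐓) (hmax : MaximalSubstr u 𝐓) :
    u = 𝐓 ∨ ∃ k ≤ m, u = abPow a b k := by
  by_cases hc : c ∈ u
  · exact Or.inl (hmax.eq_of_count_eq_one (count_T hbc hac) hc)
  have hW := isChain_T hab hbc hac (m := m)
  obtain ⟨j, rfl⟩ := exists_eq_abPow_of_isChain hab (hW.infix hu)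
    (forall_mem_of_infix_of_notMem (fun _ => mem_T.1) hu hc)
    (hmax.1.head?_ne hW (by simp [hab]))
    (hmax.2.getLast?_ne hW (getLast?_append_cons_abPow_ne hab hac _))
  have hlen := length_le_of_infix_append_cons hu hc (by simp only [length_abPow]; omega)
  simp only [length_abPow] at hlen
  rcases (by omega : j ≤ m ∨ j = m + 1) with hj | rfl
  · exact Or.inr ⟨j, hj, rfl⟩
  · exact absurd hmax.2 (not_rightMaximal_append_cons (c_notMem_abPow hbc hac _) (by simp))

theorem eq_of_maximalSubstr_T' [DecidableEq α] (hab : a ≠ b) (hbc : b ≠ c) (hac : a ≠ c)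
    (hm : 1 ≤ m) {u : List α} (hu : u <:+: 𝐓') (hmax : MaximalSubstr u 𝐓') :
    u = 𝐓' ∨ (∃ k ≤ m, u = abPow a b k) ∨ ∃ k < m, u = b :: abPow a b k := by
  by_cases hc : c ∈ u
  · exact Or.inl (hmax.eq_of_count_eq_one (count_T' hbc hac) hc)
  have hW := isChain_T' hab hbc hac (m := m)
  have hletters := forall_mem_of_infix_of_notMem (fun _ => (mem_T' hm).1) hu hc
  have hlast := hmax.2.getLast?_ne hW (getLast?_append_cons_abPow_ne hab hac _)
  have hlen := length_le_of_infix_append_cons hu hc (by simp)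
  simp only [length_cons, length_abPow] at hlen
  by_cases hb : u.head? = some b
  · obtain ⟨v, rfl⟩ := head?_eq_some_iff.1 hb
    obtain ⟨j, rfl⟩ := exists_eq_abPow_of_isChain (u := v) hab (hW.infix hu).tail
      (fun x hx => hletters x (mem_cons_of_mem b hx))
      (head?_ne_of_isChain_cons hab (hW.infix hu)) fun h => hlast (by simp [getLast?_cons, h])
    simp only [length_cons, length_abPow] at hlen
    rcases (by omega : j < m ∨ j = m) with hj | rfl
    · exact Or.inr (Or.inr ⟨j, hj, rfl⟩)
    · exact absurd hmax.2 (not_rightMaximal_append_cons (by simp [c_notMem_abPow hbc hac, hbc.symm])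
        (by simp))
  · obtain ⟨j, rfl⟩ := exists_eq_abPow_of_isChain hab (hW.infix hu) hletters hb hlast
    simp only [length_abPow] at hlen
    exact Or.inr (Or.inl ⟨j, by omega, rfl⟩)

variable (a b c m) in
theorem abPow_suffix_T' : abPow a b m <:+ 𝐓' := (suffix_cons c _).trans (suffix_append _ _)

theorem maximalSubstr_self (W : List α) : MaximalSubstr W W :=
  ⟨Or.inl (prefix_refl W), Or.inl (suffix_refl W)⟩

theorem maximalSubstr_abPow_T (hac : a ≠ c) {k : ℕ} (hk : k ≤ m) :
    abPow a b k <:+: 𝐓 ∧ MaximalSubstr (abPow a b k) 𝐓 := by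
  have hp : abPow a b k <+: 𝐓 := (abPow_prefix_abPow (by omega)).trans (prefix_append _ _)
  refine ⟨hp.isInfix, Or.inl hp, Or.inr ⟨a, c, hac, ?_, ?_⟩⟩
  · exact ((abPow_append_prefix_abPow (by omega)).trans (prefix_append _ _)).isInfix
  · exact append_singleton_infix_append_cons (abPow_suffix_abPow (by omega))

theorem maximalSubstr_abPow_T' (hbc : b ≠ c) (hac : a ≠ c) {k : ℕ} (hk : k ≤ m) :
    abPow a b k <:+: 𝐓' ∧ MaximalSubstr (abPow a b k) 𝐓' := by
  have hS := abPow_suffix_T' a b c m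
  refine ⟨(abPow_prefix_abPow hk).isInfix.trans hS.isInfix, Or.inr ⟨b, c, hbc, ?_, ?_⟩, ?_⟩
  · exact ((cons_prefix_cons.2 ⟨rfl, abPow_prefix_abPow hk⟩).trans (prefix_append _ _)).isInfix
  · exact (cons_prefix_cons.2 ⟨rfl, abPow_prefix_abPow hk⟩).isInfix.trans infix_append_right
  rcases hk.lt_or_eq with hk | rfl
  · refine Or.inr ⟨a, c, hac, (abPow_append_prefix_abPow hk).isInfix.trans hS.isInfix, ?_⟩
    exact append_singleton_infix_append_cons ((abPow_suffix_abPow hk.le).trans (suffix_cons _ _))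
  · exact Or.inl hS

theorem maximalSubstr_cons_abPow_T' (hac : a ≠ c) {k : ℕ} (hk : k < m) :
    b :: abPow a b k <:+: 𝐓' ∧ MaximalSubstr (b :: abPow a b k) 𝐓' := by
  have hp : b :: abPow a b k <+: 𝐓' :=
    (cons_prefix_cons.2 ⟨rfl, abPow_prefix_abPow hk.le⟩).trans (prefix_append _ _)
  refine ⟨hp.isInfix, Or.inl hp, Or.inr ⟨a, c, hac, ?_, ?_⟩⟩
  · exact ((cons_prefix_cons.2 ⟨rfl, abPow_append_prefix_abPow hk⟩).trans
      (prefix_append _ _)).isInfix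
  · refine append_singleton_infix_append_cons ?_
    exact ((suffix_cons a _).trans (abPow_suffix_abPow hk)).trans (suffix_cons b _)

theorem maximalSubstr_T_iff [DecidableEq α] (hab : a ≠ b) (hbc : b ≠ c) (hac : a ≠ c)
    {u : List α} : u <:+: 𝐓 ∧ MaximalSubstr u 𝐓 ↔ u = 𝐓 ∨ ∃ k ≤ m, u = abPow a b k := by
  refine ⟨fun h => eq_of_maximalSubstr_T hab hbc hac h.1 h.2, ?_⟩
  rintro (rfl | ⟨k, hk, rfl⟩)
  · exact ⟨infix_refl _, maximalSubstr_self _⟩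
  · exact maximalSubstr_abPow_T hac hk

theorem maximalSubstr_T'_iff [DecidableEq α] (hab : a ≠ b) (hbc : b ≠ c) (hac : a ≠ c)
    (hm : 1 ≤ m) {u : List α} : u <:+: 𝐓' ∧ MaximalSubstr u 𝐓' ↔
      u = 𝐓' ∨ (∃ k ≤ m, u = abPow a b k) ∨ ∃ k < m, u = b :: abPow a b k := by
  refine ⟨fun h => eq_of_maximalSubstr_T' hab hbc hac hm h.1 h.2, ?_⟩
  rintro (rfl | ⟨k, hk, rfl⟩ | ⟨k, hk, rfl⟩)
  · exact ⟨infix_refl _, maximalSubstr_self _⟩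
  · exact maximalSubstr_abPow_T' hbc hac hk
  · exact maximalSubstr_cons_abPow_T' hac hk

theorem D_abPow_T [DecidableEq α] (hab : a ≠ b) (hbc : b ≠ c) (hac : a ≠ c) {k : ℕ}
    (hk₁ : 1 ≤ k) (hk₂ : k ≤ m) : D 𝐓 (abPow a b k) = 2 := by
  obtain ⟨k, rfl⟩ := Nat.exists_eq_add_of_le' hk₁
  refine D_eq_two hab hac (isChain_T hab hbc hac) (fun _ => mem_T.1)
    (ne_of_apply_ne length (by simp only [length_abPow, length_append, length_cons]; omega))
    (getLast?_abPow_succ a b k) ?_ ?_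
  · exact ((abPow_append_prefix_abPow (by omega)).trans (prefix_append _ _)).isInfix
  · exact append_singleton_infix_append_cons (abPow_suffix_abPow (by omega))

theorem D_abPow_T' [DecidableEq α] (hab : a ≠ b) (hbc : b ≠ c) (hac : a ≠ c) {k : ℕ}
    (hk₁ : 1 ≤ k) (hk₂ : k < m) : D 𝐓' (abPow a b k) = 2 := by
  obtain ⟨k, rfl⟩ := Nat.exists_eq_add_of_le' hk₁
  refine D_eq_two hab hac (isChain_T' hab hbc hac) (fun _ => (mem_T' (by omega)).1)
    (ne_of_apply_ne length (by simp only [length_abPow, length_append, length_cons]; omega))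
    (getLast?_abPow_succ a b k) ?_ ?_
  · exact (abPow_append_prefix_abPow hk₂).isInfix.trans (abPow_suffix_T' a b c m).isInfix
  · exact append_singleton_infix_append_cons ((abPow_suffix_abPow hk₂.le).trans (suffix_cons _ _))

theorem D_cons_abPow_T' [DecidableEq α] (hab : a ≠ b) (hbc : b ≠ c) (hac : a ≠ c) {k : ℕ}
    (hk : k < m) : D 𝐓' (b :: abPow a b k) = 2 := by
  refine D_eq_two hab hac (isChain_T' hab hbc hac) (fun _ => (mem_T' (by omega)).1)
    (ne_of_apply_ne length (by simp only [length_abPow, length_append, length_cons]; omega))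
    (getLast?_cons_abPow a b k) ?_ ?_
  · exact ((cons_prefix_cons.2 ⟨rfl, abPow_append_prefix_abPow hk⟩).trans
      (prefix_append _ _)).isInfix
  · refine append_singleton_infix_append_cons ?_
    exact ((suffix_cons a _).trans (abPow_suffix_abPow hk)).trans (suffix_cons b _)

theorem D_abPow_self_T' [DecidableEq α] (hab : a ≠ b) (hbc : b ≠ c) (hac : a ≠ c)
    (hm : 1 ≤ m) : D 𝐓' (abPow a b m) = 1 := by
  -- `(ab)^m a` has `m + 1` letters `a` and no `c`, but each side of the `c` in `𝐓'` has only `m`.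
  have not_ext_a : ¬ abPow a b m ++ [a] <:+: 𝐓' := fun h => by
    rcases infix_or_infix_of_infix_append_cons h (by simp [c_notMem_abPow hbc hac, hac.symm]) with
      h | h <;> simpa [count_abPow, hab, hab.symm] using h.count_le a
  have hne : abPow a b m ≠ 𝐓' :=
    ne_of_apply_ne length (by simp only [length_abPow, length_append, length_cons]; omega)
  rw [D_eq_card hne (s := {c}), Finset.card_singleton]
  intro y
  rw [Finset.mem_singleton]
  refine ⟨fun h => h ▸ append_singleton_infix_append_cons (suffix_cons b _), fun hy => ?_⟩
  obtain ⟨k, rfl⟩ := Nat.exists_eq_add_of_le' hm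
  have hyb : y ≠ b := fun h =>
    hab (((isChain_T' hab hbc hac).rel_of_append_infix (getLast?_abPow_succ a b k) hy).2 h).symm
  rcases (mem_T' hm).1 (hy.subset (mem_append_right _ (mem_singleton_self y))) with rfl | h | h
  · exact absurd hy not_ext_a
  · exact absurd h hyb
  · exact h

theorem cdawgSize_T [DecidableEq α] (hab : a ≠ b) (hbc : b ≠ c) (hac : a ≠ c) :
    cdawgSize 𝐓 = 2 * m + 3 := by
  have hT : 𝐓 ∉ (Finset.range (m + 1)).image (abPow a b) := fun h => by
    obtain ⟨k, hk, he⟩ := Finset.mem_image.1 h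
    have := congrArg length he
    simp only [Finset.mem_range, length_abPow, length_append, length_cons] at hk this
    omega
  rw [cdawgSize_eq_sum (insert 𝐓 ((Finset.range (m + 1)).image (abPow a b))) fun u => by
      rw [maximalSubstr_T_iff hab hbc hac, Finset.mem_insert, Finset.mem_image]
      simp only [Finset.mem_range, Nat.lt_succ_iff]
      exact or_congr_right (exists_congr fun k => and_congr_right fun _ => eq_comm),
    Finset.sum_insert hT, D_self, Finset.sum_image (abPow_injective a b).injOn,
    Finset.sum_range_succ', Finset.sum_congr rfl fun k hk => D_abPow_T hab hbc hac (by omega)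
      (Finset.mem_range.1 hk), abPow_zero, D_nil_eq_three hab hbc hac fun _ => mem_T,
    Finset.sum_const, Finset.card_range, smul_eq_mul]
  ring

theorem cdawgSize_T' [DecidableEq α] (hab : a ≠ b) (hbc : b ≠ c) (hac : a ≠ c) (hm : 1 ≤ m) :
    cdawgSize 𝐓' = 4 * m + 2 := by
  set A := (Finset.range (m + 1)).image (abPow a b)
  set B := (Finset.range m).image fun k => b :: abPow a b k
  have hT' : 𝐓' ∉ A ∪ B := fun h => by
    rcases Finset.mem_union.1 h with h | h <;> obtain ⟨k, hk, he⟩ := Finset.mem_image.1 h <;>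
      have := congrArg length he <;>
      simp only [Finset.mem_range, length_abPow, length_append, length_cons] at hk this <;> omega
  have hAB : Disjoint A B := Finset.disjoint_left.2 fun u hA hB => by
    obtain ⟨j, -, rfl⟩ := Finset.mem_image.1 hA
    obtain ⟨k, -, he⟩ := Finset.mem_image.1 hB
    have := congrArg length he
    simp only [length_abPow, length_cons] at this
    omega
  have sum_A : ∑ u ∈ A, D 𝐓' u = 2 * m + 2 := by
    obtain ⟨n, rfl⟩ := Nat.exists_eq_add_of_le' hm
    rw [Finset.sum_image (abPow_injective a b).injOn, Finset.sum_range_succ,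
      Finset.sum_range_succ', Finset.sum_congr rfl fun k hk => D_abPow_T' hab hbc hac (by omega)
        (Nat.succ_lt_succ (Finset.mem_range.1 hk)), abPow_zero,
      D_nil_eq_three hab hbc hac fun _ => mem_T' hm, D_abPow_self_T' hab hbc hac hm,
      Finset.sum_const, Finset.card_range, smul_eq_mul]
    ring
  have sum_B : ∑ u ∈ B, D 𝐓' u = 2 * m := by
    rw [Finset.sum_image fun j _ k _ h => abPow_injective a b (cons_injective h),
      Finset.sum_congr rfl fun k hk => D_cons_abPow_T' hab hbc hac (by simpa using hk)]
    rw [Finset.sum_const, Finset.card_range, smul_eq_mul, mul_comm]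
  rw [cdawgSize_eq_sum (insert 𝐓' (A ∪ B)) fun u => by
      rw [maximalSubstr_T'_iff hab hbc hac hm, Finset.mem_insert, Finset.mem_union,
        Finset.mem_image, Finset.mem_image]
      simp only [Finset.mem_range, Nat.lt_succ_iff]
      exact or_congr_right (or_congr (exists_congr fun k => and_congr_right fun _ => eq_comm)
        (exists_congr fun k => and_congr_right fun _ => eq_comm)),
    Finset.sum_insert hT', D_self, Finset.sum_union hAB, sum_A, sum_B]
  ring

end Words

end

/-- Theorem 4, lower bound for left-end deletion: for
`T = (ab)^(m+1) c (ab)^m` and `T'` obtained from `T` by deleting its first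
character, `e(T) = 2m + 3` and `e(T') = 4m + 2`, hence
`e(T') - e(T) = e(T) - 4`. -/
theorem stmt17 {α : Type*} [DecidableEq α] (a b c : α) (hab : a ≠ b)
    (hbc : b ≠ c) (hac : a ≠ c) (m : ℕ) (hm : 1 ≤ m) :
    cdawgSize (abPow a b (m + 1) ++ [c] ++ abPow a b m) = 2 * m + 3 ∧
    cdawgSize ((abPow a b (m + 1) ++ [c] ++ abPow a b m).drop 1) = 4 * m + 2 ∧
    cdawgSize ((abPow a b (m + 1) ++ [c] ++ abPow a b m).drop 1) -
        cdawgSize (abPow a b (m + 1) ++ [c] ++ abPow a b m) =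
      cdawgSize (abPow a b (m + 1) ++ [c] ++ abPow a b m) - 4 := by
  have hT : abPow a b (m + 1) ++ [c] ++ abPow a b m = abPow a b (m + 1) ++ c :: abPow a b m := by
    simp
  have hT' : (abPow a b (m + 1) ++ c :: abPow a b m).drop 1 =
      b :: abPow a b m ++ c :: abPow a b m := by
    rw [abPow_succ]
    rfl
  rw [hT, hT', cdawgSize_T hab hbc hac, cdawgSize_T' hab hbc hac hm]
  omega
end
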